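/- There exists an absolute constant C > 0 such that for every M ≥ 0 and every twice continuously differentiable compactly supported g : ℝ³ → ℝ³ with |g(x)| ≤ M for all x ∈ ℝ³, one has ∫_{ℝ³} |∇g|⁶ dx ≤ C M² ∫_{ℝ³} |∇g|² |∇²g|² dx. -/

import Mathlib

open MeasureTheory

noncomputable section

/-- Euclidean three-space. -/
abbrev E3 := EuclideanSpace ℝ (Fin 3)

/-- The j-th partial derivative of a scalar function on ℝ³. -/
def pder (j : Fin 3) (f : E3 → ℝ) : E3 → ℝ :=
  fun x => fderiv ℝ f x (EuclideanSpace.single j 1)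

/-- |∇v|², the squared Euclidean norm of the gradient of v : ℝ³ → ℝ³. -/
def grad2 (v : E3 → E3) (x : E3) : ℝ :=
  ∑ i : Fin 3, ∑ j : Fin 3, (pder j (fun y => v y i) x) ^ 2

/-- |∇²v|², the squared norm of the second derivatives of v : ℝ³ → ℝ³. -/
def hess2 (v : E3 → E3) (x : E3) : ℝ :=
  ∑ i : Fin 3, ∑ j : Fin 3, ∑ k : Fin 3, (pder k (pder j (fun y => v y i)) x) ^ 2

/-- |∇³v|², the squared norm of the third derivatives of v : ℝ³ → ℝ³. -/
def third2 (v : E3 → E3) (x : E3) : ℝ :=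
  ∑ i : Fin 3, ∑ j : Fin 3, ∑ k : Fin 3, ∑ l : Fin 3,
    (pder l (pder k (pder j (fun y => v y i))) x) ^ 2

/-!
Write `|∇g|⁶ = ∑ᵢⱼ ∂ⱼgⁱ · (∂ⱼgⁱ |∇g|⁴)` and integrate by parts, moving `∂ⱼ` onto the second
factor. The new integrand is `gⁱ` times a sum of products of one second derivative with three
first derivatives, so it is pointwise at most `C M |∇g|⁴ |∇²g|`, and by AM–GM at most
`½ |∇g|⁶ + C' M² |∇g|² |∇²g|²`. Integrating and absorbing `½ ∫ |∇g|⁶`, which is finite since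
`g` has compact support, gives the bound.
-/

open Finset

theorem HasCompactSupport.finsetSum {X M ι : Type*} [TopologicalSpace X] [AddCommMonoid M]
    (s : Finset ι) {f : ι → X → M} (hf : ∀ i ∈ s, HasCompactSupport (f i)) :
    HasCompactSupport (fun x => ∑ i ∈ s, f i x) := by
  classical
  induction s using cons_induction with
  | empty => exact HasCompactSupport.zero
  | cons a s _ ih =>
    simp only [sum_cons]
    exact (hf a (mem_cons_self a s)).add (ih fun i hi => hf i (mem_cons_of_mem hi))

theorem integral_sum_sum {α ι κ : Type*} [MeasurableSpace α] {μ : Measure α} [Fintype ι]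
    [Fintype κ] {f : ι → κ → α → ℝ} (hf : ∀ i j, Integrable (f i j) μ) :
    ∫ x, ∑ i, ∑ j, f i j x ∂μ = ∑ i, ∑ j, ∫ x, f i j x ∂μ := by
  rw [integral_finsetSum _ fun i _ => integrable_finsetSum _ fun j _ => hf i j]
  exact sum_congr rfl fun i _ => integral_finsetSum _ fun j _ => hf i j

theorem abs_sum_sum_le {ι κ : Type*} [Fintype ι] [Fintype κ] {t : ι → κ → ℝ} {c : ℝ}
    (ht : ∀ i j, |t i j| ≤ c) :
    |∑ i, ∑ j, t i j| ≤ Fintype.card ι * Fintype.card κ * c := by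
  rw [← Fintype.sum_prod_type']
  calc |∑ q : ι × κ, t q.1 q.2| ≤ ∑ q : ι × κ, |t q.1 q.2| := abs_sum_le_sum_abs _ _
    _ ≤ Fintype.card (ι × κ) • c := sum_le_card_nsmul _ _ _ fun q _ => ht q.1 q.2
    _ = Fintype.card ι * Fintype.card κ * c := by simp [Fintype.card_prod]

theorem abs_le_sqrt_sum_sum_sq {ι κ : Type*} [Fintype ι] [Fintype κ] (a : ι → κ → ℝ)
    (i : ι) (j : κ) : |a i j| ≤ √(∑ i, ∑ j, a i j ^ 2) := by
  refine Real.abs_le_sqrt ?_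
  rw [← Fintype.sum_prod_type']
  exact single_le_sum (f := fun q : ι × κ => a q.1 q.2 ^ 2) (fun _ _ => sq_nonneg _)
    (mem_univ (i, j))

theorem abs_le_sqrt_sum_sum_sum_sq {ι κ ν : Type*} [Fintype ι] [Fintype κ] [Fintype ν]
    (e : ι → κ → ν → ℝ) (i : ι) (j : κ) (k : ν) :
    |e i j k| ≤ √(∑ i, ∑ j, ∑ k, e i j k ^ 2) := by
  refine (abs_le_sqrt_sum_sum_sq (fun i j => e i j.1 j.2) i (j, k)).trans_eq ?_
  simp_rw [Fintype.sum_prod_type]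

theorem integrand_le_of_abs_entries_le {M F p s : ℝ} {u : Fin 3 → ℝ} {a : Fin 3 → Fin 3 → ℝ}
    {e : Fin 3 → Fin 3 → Fin 3 → ℝ} (hF : F = p ^ 2) (hu : ∀ i, |u i| ≤ M)
    (ha : ∀ i j, |a i j| ≤ p) (he : ∀ i j k, |e i j k| ≤ s) :
    ∑ i, ∑ j, -(u i * (e i j j * F ^ 2 + a i j * (2 * F * ∑ k, ∑ l, 2 * a k l * e k l j)))
      ≤ 333 * M * p ^ 4 * s := by
  have hM : 0 ≤ M := (abs_nonneg _).trans (hu 0)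
  have hp : 0 ≤ p := (abs_nonneg _).trans (ha 0 0)
  have hF0 : 0 ≤ F := hF ▸ sq_nonneg p
  have hdF j : |∑ k, ∑ l, 2 * a k l * e k l j| ≤ 18 * (p * s) := by
    have hkl k l : |2 * a k l * e k l j| ≤ 2 * (p * s) := by
      rw [abs_mul, abs_mul, abs_two, mul_assoc]
      gcongr
      exacts [ha k l, he k l j]
    have := abs_sum_sum_le hkl
    simp only [Fintype.card_fin, Nat.cast_ofNat] at this
    linarith
  have hterm i j : |-(u i * (e i j j * F ^ 2
      + a i j * (2 * F * ∑ k, ∑ l, 2 * a k l * e k l j)))| ≤ 37 * M * p ^ 4 * s := by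
    rw [abs_neg, abs_mul]
    calc _ ≤ M * (|e i j j| * F ^ 2 + |a i j| * (2 * F * |∑ k, ∑ l, 2 * a k l * e k l j|)) := by
          gcongr
          · exact hu i
          · refine (abs_add_le _ _).trans_eq ?_
            simp only [abs_mul, abs_two, abs_pow, abs_of_nonneg hF0]
      _ ≤ M * (s * F ^ 2 + p * (2 * F * (18 * (p * s)))) := by
          gcongr
          exacts [he i j j, ha i j, hdF j]
      _ = 37 * M * p ^ 4 * s := by rw [hF]; ring
  refine (le_abs_self _).trans ?_
  have := abs_sum_sum_le hterm
  simp only [Fintype.card_fin, Nat.cast_ofNat] at this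
  linarith

section PartialDerivative

variable {f h : E3 → ℝ} {x : E3}

theorem contDiff_pder {m n : WithTop ℕ∞} (hf : ContDiff ℝ n f) (hmn : m + 1 ≤ n) (j : Fin 3) :
    ContDiff ℝ m (pder j f) :=
  show ContDiff ℝ m ((fun L : E3 →L[ℝ] ℝ => L (EuclideanSpace.single j 1)) ∘ fderiv ℝ f) from
  (ContinuousLinearMap.apply ℝ ℝ (EuclideanSpace.single j 1)).contDiff.comp
    (hf.fderiv_right hmn)

theorem continuous_pder (hf : ContDiff ℝ 1 f) (j : Fin 3) : Continuous (pder j f) :=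
  (contDiff_pder (m := 0) hf (by norm_num) j).continuous

theorem HasCompactSupport.pder (hf : HasCompactSupport f) (j : Fin 3) :
    HasCompactSupport (pder j f) :=
  hf.fderiv_apply ℝ _

theorem pder_mul (hf : DifferentiableAt ℝ f x) (hh : DifferentiableAt ℝ h x) (j : Fin 3) :
    pder j (fun y => f y * h y) x = pder j f x * h x + f x * pder j h x := by
  simp only [pder, fderiv_fun_mul hf hh, add_apply, smul_apply, smul_eq_mul]
  ring

theorem pder_sq (hf : DifferentiableAt ℝ f x) (j : Fin 3) :
    pder j (fun y => f y ^ 2) x = 2 * f x * pder j f x := by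
  simp only [sq, pder_mul hf hf]
  ring

theorem pder_sum {ι : Type*} (s : Finset ι) {f : ι → E3 → ℝ}
    (hf : ∀ i ∈ s, DifferentiableAt ℝ (f i) x) (j : Fin 3) :
    pder j (fun y => ∑ i ∈ s, f i y) x = ∑ i ∈ s, pder j (f i) x := by
  simp [pder, fderiv_fun_sum hf]

theorem integral_pder_mul_eq_neg (hf : ContDiff ℝ 1 f) (hh : ContDiff ℝ 1 h)
    (hh_supp : HasCompactSupport h) (j : Fin 3) :
    ∫ x, pder j f x * h x = -∫ x, f x * pder j h x := by
  have hf' := continuous_pder hf j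
  have hh' := continuous_pder hh j
  have ibp := integral_mul_fderiv_eq_neg_fderiv_mul_of_integrable (μ := volume)
    (v := EuclideanSpace.single j 1)
    ((hf'.mul hh.continuous).integrable_of_hasCompactSupport hh_supp.mul_left)
    ((hf.continuous.mul hh').integrable_of_hasCompactSupport (hh_supp.pder j).mul_left)
    ((hf.continuous.mul hh.continuous).integrable_of_hasCompactSupport hh_supp.mul_left)
    (fun x _ => hf.differentiable one_ne_zero x) (fun x _ => hh.differentiable one_ne_zero x)
  exact (neg_eq_iff_eq_neg.mpr ibp).symm

end PartialDerivative

section VectorField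

variable {g : E3 → E3}

def gradEntry (g : E3 → E3) (i j : Fin 3) : E3 → ℝ := pder j (fun y => g y i)

def hessEntry (g : E3 → E3) (i j k : Fin 3) : E3 → ℝ := pder k (gradEntry g i j)

def weightedGradEntry (g : E3 → E3) (i j : Fin 3) : E3 → ℝ :=
  fun y => gradEntry g i j y * grad2 g y ^ 2

theorem grad2_eq_sum_gradEntry_sq (x : E3) :
    grad2 g x = ∑ i, ∑ j, gradEntry g i j x ^ 2 := rfl

theorem hess2_eq_sum_hessEntry_sq (x : E3) :
    hess2 g x = ∑ i, ∑ j, ∑ k, hessEntry g i j k x ^ 2 := rfl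

theorem grad2_nonneg (x : E3) : 0 ≤ grad2 g x :=
  sum_nonneg fun _ _ => sum_nonneg fun _ _ => sq_nonneg _

theorem hess2_nonneg (x : E3) : 0 ≤ hess2 g x :=
  sum_nonneg fun _ _ => sum_nonneg fun _ _ => sum_nonneg fun _ _ => sq_nonneg _

theorem contDiff_gradEntry (hg : ContDiff ℝ 2 g) (i j : Fin 3) :
    ContDiff ℝ 1 (gradEntry g i j) :=
  contDiff_pder ((EuclideanSpace.proj i).contDiff.comp hg) (by norm_num) j

theorem hasCompactSupport_gradEntry (hg : HasCompactSupport g) (i j : Fin 3) :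
    HasCompactSupport (gradEntry g i j) :=
  (hg.comp_left (g := fun z : E3 => z i) rfl).pder j

theorem contDiff_grad2 (hg : ContDiff ℝ 2 g) : ContDiff ℝ 1 (grad2 g) := by
  rw [show grad2 g = fun y => ∑ i, ∑ j, gradEntry g i j y ^ 2 from rfl]
  exact ContDiff.sum fun i _ => ContDiff.sum fun j _ => (contDiff_gradEntry hg i j).pow 2

theorem hasCompactSupport_grad2 (hg : HasCompactSupport g) : HasCompactSupport (grad2 g) := by
  rw [show grad2 g = fun y => ∑ i, ∑ j, gradEntry g i j y ^ 2 from rfl]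
  exact .finsetSum _ fun i _ => .finsetSum _ fun j _ =>
    (hasCompactSupport_gradEntry hg i j).comp_left (g := fun t : ℝ => t ^ 2) (zero_pow two_ne_zero)

theorem continuous_hess2 (hg : ContDiff ℝ 2 g) : Continuous (hess2 g) :=
  continuous_finsetSum _ fun i _ => continuous_finsetSum _ fun j _ =>
    continuous_finsetSum _ fun k _ =>
      (continuous_pder (contDiff_gradEntry hg i j) k).pow 2

theorem pder_grad2 (hg : ContDiff ℝ 2 g) (k : Fin 3) (x : E3) :
    pder k (grad2 g) x = ∑ i, ∑ j, 2 * gradEntry g i j x * hessEntry g i j k x := by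
  have hd i j : DifferentiableAt ℝ (gradEntry g i j) x :=
    (contDiff_gradEntry hg i j).differentiable one_ne_zero x
  rw [show grad2 g = fun y => ∑ i, ∑ j, gradEntry g i j y ^ 2 from rfl,
    pder_sum _ (fun i _ => DifferentiableAt.fun_sum fun j _ => (hd i j).fun_pow 2)]
  refine sum_congr rfl fun i _ => ?_
  rw [pder_sum _ (fun j _ => (hd i j).fun_pow 2)]
  exact sum_congr rfl fun j _ => pder_sq (hd i j) k

theorem pder_weightedGradEntry (hg : ContDiff ℝ 2 g) (i j : Fin 3) (x : E3) :
    pder j (weightedGradEntry g i j) x = hessEntry g i j j x * grad2 g x ^ 2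
      + gradEntry g i j x * (2 * grad2 g x * pder j (grad2 g) x) := by
  have hF := (contDiff_grad2 hg).differentiable one_ne_zero x
  rw [show weightedGradEntry g i j = fun y => gradEntry g i j y * grad2 g y ^ 2 from rfl,
    pder_mul ((contDiff_gradEntry hg i j).differentiable one_ne_zero x)
    (hF.fun_pow 2), pder_sq hF]
  rfl

theorem contDiff_weightedGradEntry (hg : ContDiff ℝ 2 g) (i j : Fin 3) :
    ContDiff ℝ 1 (weightedGradEntry g i j) :=
  (contDiff_gradEntry hg i j).mul ((contDiff_grad2 hg).pow 2)

theorem integrable_mul_pder_weightedGradEntry (hg : ContDiff ℝ 2 g)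
    (hsupp : HasCompactSupport g) (i j : Fin 3) :
    Integrable fun x => g x i * pder j (weightedGradEntry g i j) x :=
  ((EuclideanSpace.proj i).continuous.comp hg.continuous |>.mul
    (continuous_pder (contDiff_weightedGradEntry hg i j) j)).integrable_of_hasCompactSupport
    ((hasCompactSupport_gradEntry hsupp i j).mul_right.pder j).mul_left

theorem integrable_grad2_pow_three (hg : ContDiff ℝ 2 g) (hsupp : HasCompactSupport g) :
    Integrable fun x => grad2 g x ^ 3 := by
  have hsupp3 : HasCompactSupport fun x => grad2 g x ^ 3 :=
    (hasCompactSupport_grad2 hsupp).comp_left (g := fun t : ℝ => t ^ 3) (by norm_num)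
  exact ((contDiff_grad2 hg).continuous.pow 3).integrable_of_hasCompactSupport hsupp3

theorem integrable_grad2_mul_hess2 (hg : ContDiff ℝ 2 g) (hsupp : HasCompactSupport g) :
    Integrable fun x => grad2 g x * hess2 g x :=
  ((contDiff_grad2 hg).continuous.mul (continuous_hess2 hg)).integrable_of_hasCompactSupport
    (hasCompactSupport_grad2 hsupp).mul_right

theorem integral_grad2_pow_three_eq (hg : ContDiff ℝ 2 g) (hsupp : HasCompactSupport g) :
    ∫ x, grad2 g x ^ 3 = ∫ x, ∑ i, ∑ j, -(g x i * pder j (weightedGradEntry g i j) x) := by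
  have hcube x : grad2 g x ^ 3 = ∑ i, ∑ j, gradEntry g i j x * weightedGradEntry g i j x := by
    rw [show grad2 g x ^ 3 = (∑ i, ∑ j, gradEntry g i j x ^ 2) * grad2 g x ^ 2 by
      rw [← grad2_eq_sum_gradEntry_sq]; ring, sum_mul]
    refine sum_congr rfl fun i _ => ?_
    rw [sum_mul]
    exact sum_congr rfl fun j _ => by rw [weightedGradEntry]; ring
  have hint i j : Integrable fun x => gradEntry g i j x * weightedGradEntry g i j x :=
    ((contDiff_gradEntry hg i j).continuous.mul
      (contDiff_weightedGradEntry hg i j).continuous).integrable_of_hasCompactSupport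
      (hasCompactSupport_gradEntry hsupp i j).mul_right
  have hibp i j : ∫ x, gradEntry g i j x * weightedGradEntry g i j x
      = ∫ x, -(g x i * pder j (weightedGradEntry g i j) x) := by
    rw [integral_neg]
    exact integral_pder_mul_eq_neg ((EuclideanSpace.proj i).contDiff.comp hg |>.of_le one_le_two)
      (contDiff_weightedGradEntry hg i j)
      (hasCompactSupport_gradEntry hsupp i j).mul_right j
  simp_rw [hcube]
  rw [integral_sum_sum hint, integral_sum_sum (f := fun i j x => -(g x i *
    pder j (weightedGradEntry g i j) x)) fun i j =>
      (integrable_mul_pder_weightedGradEntry hg hsupp i j).neg]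
  simp_rw [hibp]

theorem neg_sum_mul_pder_weightedGradEntry_le (hg : ContDiff ℝ 2 g) {M : ℝ}
    (hbd : ∀ x, ‖g x‖ ≤ M) (x : E3) :
    ∑ i, ∑ j, -(g x i * pder j (weightedGradEntry g i j) x)
      ≤ grad2 g x ^ 3 / 2 + 333 ^ 2 / 2 * M ^ 2 * (grad2 g x * hess2 g x) := by
  set p := √(grad2 g x)
  set s := √(hess2 g x)
  have hF : grad2 g x = p ^ 2 := (Real.sq_sqrt (grad2_nonneg x)).symm
  have hH : hess2 g x = s ^ 2 := (Real.sq_sqrt (hess2_nonneg x)).symm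
  have hu i : |g x i| ≤ M := (PiLp.norm_apply_le (g x) i).trans (hbd x)
  simp_rw [pder_weightedGradEntry hg, pder_grad2 hg]
  calc _ ≤ 333 * M * p ^ 4 * s :=
        integrand_le_of_abs_entries_le hF hu
          (abs_le_sqrt_sum_sum_sq fun i j => gradEntry g i j x)
          (abs_le_sqrt_sum_sum_sum_sq fun i j k => hessEntry g i j k x)
    _ ≤ _ := by
      rw [hF, hH]
      nlinarith [sq_nonneg (p ^ 3 - 333 * M * p * s)]

end VectorField

/-- there is an absolute constant C > 0 such that for every M ≥ 0 and
every C² compactly supported g : ℝ³ → ℝ³ with |g| ≤ M everywhere,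
∫ |∇g|⁶ ≤ C M² ∫ |∇g|² |∇²g|². -/
theorem grad_sixth_power_bound :
    ∃ C : ℝ, 0 < C ∧ ∀ M : ℝ, 0 ≤ M →
      ∀ g : E3 → E3, ContDiff ℝ 2 g → HasCompactSupport g → (∀ x : E3, ‖g x‖ ≤ M) →
        ∫ x, (grad2 g x) ^ 3 ≤ C * M ^ 2 * ∫ x, grad2 g x * hess2 g x := by
  refine ⟨333 ^ 2, by norm_num, fun M _ g hg hsupp hbd => ?_⟩
  have hF3 := integrable_grad2_pow_three hg hsupp
  have hFH := integrable_grad2_mul_hess2 hg hsupp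
  have habsorb : ∫ x, grad2 g x ^ 3
      ≤ (∫ x, grad2 g x ^ 3) / 2 + 333 ^ 2 / 2 * M ^ 2 * ∫ x, grad2 g x * hess2 g x :=
    calc ∫ x, grad2 g x ^ 3
        = ∫ x, ∑ i, ∑ j, -(g x i * pder j (weightedGradEntry g i j) x) :=
          integral_grad2_pow_three_eq hg hsupp
      _ ≤ ∫ x, (grad2 g x ^ 3 / 2 + 333 ^ 2 / 2 * M ^ 2 * (grad2 g x * hess2 g x)) :=
          integral_mono (integrable_finsetSum _ fun i _ => integrable_finsetSum _ fun j _ =>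
            (integrable_mul_pder_weightedGradEntry hg hsupp i j).neg)
            ((hF3.div_const 2).add (hFH.const_mul _)) (neg_sum_mul_pder_weightedGradEntry_le hg hbd)
      _ = (∫ x, grad2 g x ^ 3) / 2 + 333 ^ 2 / 2 * M ^ 2 * ∫ x, grad2 g x * hess2 g x := by
          rw [integral_add (hF3.div_const 2) (hFH.const_mul _), integral_div, integral_const_mul]
  linarith
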